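/- arXiv:1006.1403 — 5 statements merged into one kernel-verified Lean document; each statement's English description precedes it below -/
import Mathlib

section
/- Let S be a finite nonempty set, β ∈ (0,1) rational, r : S → ℚ, and for each s let A(s) be a nonempty finite set of finitely supported probability distributions on S with rational values. Then the unique fixed point v* of the Bellman operator (T v)(s) = max_{δ ∈ A(s)} (β·r s + (1-β)·∑_t δ t · v t) takes rational values at every state. -/
/-!
Fix a greedy policy, i.e. a maximiser `δ s ∈ A s` of the Bellman operator at `v*` in each state.
Then `v*` solves the linear system `(1 - (1 - β) P) v = β r`, where `P` is the rational
row-stochastic matrix of that policy. Since `|1 - β| < 1`, a maximum-modulus argument shows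
that `1 - (1 - β) P` is invertible over `ℚ`; its image over `ℝ` is then invertible too, so the
unique real solution `v*` is the image of the rational one.
-/

open Matrix

namespace Matrix

variable {n : Type*} [Fintype n] [DecidableEq n]

section LinearOrderedField

variable {K : Type*} [Field K] [LinearOrder K] [IsStrictOrderedRing K]
  {P : Matrix n n K}

lemma abs_mulVec_le_of_mem_rowStochastic (hP : P ∈ rowStochastic K n) {v : n → K} {M : K}
    (hv : ∀ j, |v j| ≤ M) (i : n) : |(P *ᵥ v) i| ≤ M :=
  calc |(P *ᵥ v) i| = |∑ j, P i j * v j| := rfl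
    _ ≤ ∑ j, P i j * |v j| := by
      refine (Finset.abs_sum_le_sum_abs _ _).trans_eq (Finset.sum_congr rfl fun j _ => ?_)
      rw [abs_mul, abs_of_nonneg (nonneg_of_mem_rowStochastic hP)]
    _ ≤ ∑ j, P i j * M :=
      Finset.sum_le_sum fun j _ => mul_le_mul_of_nonneg_left (hv j) (nonneg_of_mem_rowStochastic hP)
    _ = M := by rw [← Finset.sum_mul, sum_row_of_mem_rowStochastic hP, one_mul]

lemma eq_zero_of_eq_smul_mulVec_of_mem_rowStochastic (hP : P ∈ rowStochastic K n) {γ : K}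
    (hγ : |γ| < 1) {v : n → K} (hv : v = γ • P *ᵥ v) : v = 0 := by
  ext i
  have : Nonempty n := ⟨i⟩
  obtain ⟨m, hm⟩ := Finite.exists_max fun j => |v j|
  have hvm : |v m| ≤ |γ| * |v m| := by
    calc |v m| = |(γ • P *ᵥ v) m| := by rw [← hv]
      _ = |γ| * |(P *ᵥ v) m| := by simp only [Pi.smul_apply, smul_eq_mul, abs_mul]
      _ ≤ |γ| * |v m| :=
        mul_le_mul_of_nonneg_left (abs_mulVec_le_of_mem_rowStochastic hP hm m) (abs_nonneg γ)
  have hm0 : |v m| = 0 := le_antisymm (by nlinarith [abs_nonneg (v m)]) (abs_nonneg _)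
  exact abs_eq_zero.mp (le_antisymm (hm i |>.trans hm0.le) (abs_nonneg _))

lemma isUnit_one_sub_smul_of_mem_rowStochastic (hP : P ∈ rowStochastic K n) {γ : K}
    (hγ : |γ| < 1) : IsUnit (1 - γ • P) := by
  refine mulVec_injective_iff_isUnit.mp fun v w hvw => sub_eq_zero.mp ?_
  refine eq_zero_of_eq_smul_mulVec_of_mem_rowStochastic hP hγ (sub_eq_zero.mp ?_)
  rw [← sub_eq_zero, ← mulVec_sub] at hvw
  simpa [sub_mulVec, smul_mulVec] using hvw

end LinearOrderedField

lemma exists_eq_comp_of_map_mulVec_eq {R S : Type*} [CommRing R] [CommRing S] (f : R →+* S)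
    {A : Matrix n n R} (hA : IsUnit A) {c : n → R} {v : n → S} (hv : A.map f *ᵥ v = f ∘ c) :
    ∃ w : n → R, v = f ∘ w := by
  obtain ⟨w, rfl⟩ := mulVec_surjective_iff_isUnit.mpr hA c
  refine ⟨w, mulVec_injective_of_isUnit (hA.map f.mapMatrix) ?_⟩
  change A.map f *ᵥ v = A.map f *ᵥ (f ∘ w)
  ext i
  rw [hv, Function.comp_apply, RingHom.map_mulVec]

end Matrix

theorem bellman_fixed_point_rational_general {S : Type*} [Fintype S]
    (β : ℚ) (hβ0 : 0 < β) (hβ1 : β < 1) (r : S → ℚ)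
    (A : S → Finset (S → ℝ)) (hA : ∀ s, (A s).Nonempty)
    (hdist : ∀ s, ∀ δ ∈ A s, (∀ t, 0 ≤ δ t) ∧ ∑ t, δ t = 1)
    (hrat : ∀ s, ∀ δ ∈ A s, ∀ t, ∃ q : ℚ, δ t = (q : ℝ))
    (vstar : S → ℝ)
    (hfix : ∀ s, vstar s = (A s).sup' (hA s)
        (fun δ => (β : ℝ) * (r s : ℝ) + (1 - (β : ℝ)) * ∑ t, δ t * vstar t)) :
    ∀ s, ∃ q : ℚ, vstar s = (q : ℝ) := by
  classical
  choose δ hδA hδ using fun s => (A s).exists_mem_eq_sup' (hA s)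
    fun δ => (β : ℝ) * (r s : ℝ) + (1 - (β : ℝ)) * ∑ t, δ t * vstar t
  choose q hq using fun s => hrat s (δ s) (hδA s)
  have hQ : of q ∈ rowStochastic ℚ S := by
    refine mem_rowStochastic_iff_sum.mpr ⟨fun s t => ?_, fun s => ?_⟩
    · exact_mod_cast hq s t ▸ (hdist s (δ s) (hδA s)).1 t
    · exact_mod_cast (Finset.sum_congr rfl fun t _ => hq s t) ▸ (hdist s (δ s) (hδA s)).2
  have hv : (1 - (1 - β) • of q).map (Rat.castHom ℝ) *ᵥ vstar = Rat.castHom ℝ ∘ (β • r) := by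
    ext s
    have := (hfix s).trans (hδ s)
    simp [mulVec, dotProduct, hq, one_apply, apply_ite (Rat.cast : ℚ → ℝ), sub_mul,
      Finset.sum_sub_distrib, Finset.mul_sum, mul_assoc] at this ⊢
    linarith
  obtain ⟨w, hw⟩ := exists_eq_comp_of_map_mulVec_eq (Rat.castHom ℝ)
    (isUnit_one_sub_smul_of_mem_rowStochastic hQ (abs_lt.mpr ⟨by linarith, by linarith⟩)) hv
  exact fun s => ⟨w s, congrFun hw s⟩

theorem bellman_fixed_point_rational {S : Type*} [Fintype S] [Nonempty S]
    (β : ℚ) (hβ0 : 0 < β) (hβ1 : β < 1) (r : S → ℚ)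
    (A : S → Finset (S → ℝ)) (hA : ∀ s, (A s).Nonempty)
    (hdist : ∀ s, ∀ δ ∈ A s, (∀ t, 0 ≤ δ t) ∧ ∑ t, δ t = 1)
    (hrat : ∀ s, ∀ δ ∈ A s, ∀ t, ∃ q : ℚ, δ t = (q : ℝ))
    (vstar : S → ℝ)
    (hfix : ∀ s, vstar s = (A s).sup' (hA s)
        (fun δ => (β : ℝ) * (r s : ℝ) + (1 - (β : ℝ)) * ∑ t, δ t * vstar t)) :
    ∀ s, ∃ q : ℚ, vstar s = (q : ℝ) :=
  bellman_fixed_point_rational_general β hβ0 hβ1 r A hA hdist hrat vstar hfix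
end

section
/- Let F be an ordered subfield of ℝ, S a finite nonempty set, β ∈ (0,1) ∩ F, r : S → F, and A(s) nonempty finite sets of probability distributions on S with values in F. Then the unique fixed point of the Bellman operator (T v)(s) = max_{δ ∈ A(s)} (β·r s + (1-β)·∑_t δ t · v t) takes values in F at every state. -/
theorem bellman_ordered_field_property {S : Type*} [Fintype S] [Nonempty S]
    (F : Subfield ℝ)
    (β : ℝ) (hβ0 : 0 < β) (hβ1 : β < 1) (hβF : β ∈ F)
    (r : S → ℝ) (hrF : ∀ s, r s ∈ F)
    (A : S → Finset (S → ℝ)) (hA : ∀ s, (A s).Nonempty)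
    (hdist : ∀ s, ∀ δ ∈ A s, (∀ t, 0 ≤ δ t) ∧ ∑ t, δ t = 1)
    (hAF : ∀ s, ∀ δ ∈ A s, ∀ t, δ t ∈ F)
    (vstar : S → ℝ)
    (hfix : ∀ s, vstar s = (A s).sup' (hA s)
        (fun δ => β * r s + (1 - β) * ∑ t, δ t * vstar t)) :
    ∀ s, vstar s ∈ F := by
  classical
  -- choose an optimal action at each state
  have hsel : ∀ s, ∃ d ∈ A s, vstar s = β * r s + (1 - β) * ∑ t, d t * vstar t := by
    intro s
    obtain ⟨b, hb, heq⟩ := Finset.exists_mem_eq_sup' (hA s)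
      (fun δ => β * r s + (1 - β) * ∑ t, δ t * vstar t)
    exact ⟨b, hb, (hfix s).trans heq⟩
  choose d hdA hdeq using hsel
  set M : Matrix S S ℝ :=
    Matrix.of (fun s t => (if s = t then (1:ℝ) else 0) - (1 - β) * d s t) with hMdef
  have hMexp : ∀ (x : S → ℝ) (s : S),
      M.mulVec x s = x s - (1 - β) * ∑ t, d s t * x t := by
    intro x s
    show ∑ t, ((if s = t then (1:ℝ) else 0) - (1 - β) * d s t) * x t = _
    simp only [sub_mul, Finset.sum_sub_distrib, ite_mul, one_mul, zero_mul,
      Finset.sum_ite_eq, Finset.mem_univ, if_true]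
    rw [Finset.mul_sum]
    simp [mul_assoc]
  -- key injectivity lemma (strict diagonal dominance)
  have key : ∀ x : S → ℝ, M.mulVec x = 0 → x = 0 := by
    intro x hx
    obtain ⟨s₀, _, hs₀⟩ := Finset.exists_max_image (Finset.univ : Finset S)
      (fun s => |x s|) ⟨Classical.arbitrary S, Finset.mem_univ _⟩
    have hx0 : ∀ s, x s = (1 - β) * ∑ t, d s t * x t := by
      intro s
      have := congrFun hx s
      rw [hMexp] at this
      simpa [sub_eq_zero] using this
    have hb : |x s₀| ≤ (1 - β) * |x s₀| := by
      calc |x s₀| = (1 - β) * |∑ t, d s₀ t * x t| := by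
            rw [hx0 s₀, abs_mul, abs_of_nonneg (by linarith)]
        _ ≤ (1 - β) * ∑ t, d s₀ t * |x s₀| := by
            apply mul_le_mul_of_nonneg_left _ (by linarith)
            calc |∑ t, d s₀ t * x t| ≤ ∑ t, |d s₀ t * x t| := Finset.abs_sum_le_sum_abs _ _
              _ ≤ ∑ t, d s₀ t * |x s₀| := by
                  apply Finset.sum_le_sum
                  intro t _
                  rw [abs_mul, abs_of_nonneg ((hdist s₀ _ (hdA s₀)).1 t)]
                  exact mul_le_mul_of_nonneg_left (hs₀ t (Finset.mem_univ t))
                    ((hdist s₀ _ (hdA s₀)).1 t)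
        _ = (1 - β) * |x s₀| := by
            rw [← Finset.sum_mul, (hdist s₀ _ (hdA s₀)).2, one_mul]
    have hzero : |x s₀| = 0 := by nlinarith [abs_nonneg (x s₀)]
    funext s
    have := hs₀ s (Finset.mem_univ s)
    have : |x s| ≤ 0 := by linarith
    simpa using abs_eq_zero.mp (le_antisymm this (abs_nonneg _))
  have hdet : M.det ≠ 0 := by
    intro h
    obtain ⟨v, hv0, hv⟩ := (Matrix.exists_mulVec_eq_zero_iff (M := M)).mpr h
    exact hv0 (key v hv)
  -- the matrix and rhs over F
  have hMF : ∀ s t, M s t ∈ F := by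
    intro s t
    refine F.sub_mem ?_ (F.mul_mem (F.sub_mem F.one_mem hβF) (hAF s _ (hdA s) t))
    split_ifs
    · exact F.one_mem
    · exact F.zero_mem
  set M' : Matrix S S F := Matrix.of (fun s t => (⟨M s t, hMF s t⟩ : F)) with hM'def
  have hmap : M'.map F.subtype = M := by
    ext s t; rfl
  have hdet' : M'.det ≠ 0 := by
    intro h
    apply hdet
    rw [← hmap, ← RingHom.mapMatrix_apply, ← RingHom.map_det, h, map_zero]
  haveI : Invertible M' := M'.invertibleOfIsUnitDet (isUnit_iff_ne_zero.mpr hdet')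
  set c' : S → F := fun s => (⟨β * r s, F.mul_mem hβF (hrF s)⟩ : F) with hc'def
  set w : S → F := (⅟M').mulVec c' with hwdef
  have hw : M'.mulVec w = c' := by
    rw [hwdef, Matrix.mulVec_mulVec, mul_invOf_self, Matrix.one_mulVec]
  -- vstar and the coercion of w solve the same system
  have h1 : M.mulVec vstar = fun s => β * r s := by
    funext s
    rw [hMexp]
    have := hdeq s
    linarith
  have h2 : M.mulVec (fun t => (w t : ℝ)) = fun s => β * r s := by
    funext s
    have := congrFun hw s
    have hcoe : ((M'.mulVec w s : F) : ℝ) = M.mulVec (fun t => (w t : ℝ)) s := by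
      show ((∑ t, M' s t * w t : F) : ℝ) = ∑ t, M s t * (w t : ℝ)
      push_cast
      rfl
    have : ((M'.mulVec w s : F) : ℝ) = ((c' s : F) : ℝ) := by rw [this]
    rw [hcoe] at this
    simpa [hc'def] using this
  have h3 : M.mulVec (vstar - fun t => (w t : ℝ)) = 0 := by
    rw [Matrix.mulVec_sub, h1, h2, sub_self]
  have h4 := key _ h3
  intro s
  have : vstar s - (w s : ℝ) = 0 := congrFun h4 s
  have : vstar s = (w s : ℝ) := by linarith
  rw [this]
  exact (w s).2
end

section
/- Let S be a finite nonempty set, β ∈ (0,1), r : S → ℝ, and for each s let A(s) be a nonempty finite set of probability distributions on S. For v : S → ℝ, if v s ≥ β·r s + (1-β)·∑_t δ t · v t for all s ∈ S and all δ ∈ A(s), then v s ≥ v* s for all s, where v* is the unique fixed point of the Bellman operator (T v)(s) = max_{δ ∈ A(s)} (β·r s + (1-β)·∑_t δ t · v t). -/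
theorem lp_feasible_dominates_value {S : Type*} [Fintype S] [Nonempty S]
    (β : ℝ) (hβ0 : 0 < β) (hβ1 : β < 1) (r : S → ℝ)
    (A : S → Finset (S → ℝ)) (hA : ∀ s, (A s).Nonempty)
    (hdist : ∀ s, ∀ δ ∈ A s, (∀ t, 0 ≤ δ t) ∧ ∑ t, δ t = 1)
    (vstar : S → ℝ)
    (hfix : ∀ s, vstar s = (A s).sup' (hA s)
        (fun δ => β * r s + (1 - β) * ∑ t, δ t * vstar t))
    (v : S → ℝ)
    (hv : ∀ s, ∀ δ ∈ A s, β * r s + (1 - β) * ∑ t, δ t * v t ≤ v s) :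
    ∀ s, vstar s ≤ v s := by
  -- Let M be the max of vstar - v, attained at s₀
  obtain ⟨s₀, _, hs₀⟩ := Finset.exists_max_image Finset.univ
    (fun s => vstar s - v s) ⟨Classical.arbitrary S, Finset.mem_univ _⟩
  set M := vstar s₀ - v s₀ with hM
  have hMle : M ≤ (1 - β) * M := by
    -- pick δ attaining the sup at s₀
    obtain ⟨δ, hδA, hδ⟩ := Finset.exists_mem_eq_sup' (hA s₀)
      (fun δ => β * r s₀ + (1 - β) * ∑ t, δ t * vstar t)
    have hfix0 : vstar s₀ = β * r s₀ + (1 - β) * ∑ t, δ t * vstar t := by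
      rw [hfix s₀, hδ]
    have hv0 := hv s₀ δ hδA
    obtain ⟨hpos, hsum⟩ := hdist s₀ δ hδA
    have key : M ≤ (1 - β) * ∑ t, δ t * (vstar t - v t) := by
      have : ∑ t, δ t * (vstar t - v t)
          = (∑ t, δ t * vstar t) - ∑ t, δ t * v t := by
        rw [← Finset.sum_sub_distrib]; congr 1; ext t; ring
      rw [this]
      have := hfix0
      nlinarith [hv0]
    refine key.trans ?_
    have hβ' : (0:ℝ) ≤ 1 - β := by linarith
    refine mul_le_mul_of_nonneg_left ?_ hβ'
    calc ∑ t, δ t * (vstar t - v t) ≤ ∑ t, δ t * M := by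
          apply Finset.sum_le_sum
          intro t _
          exact mul_le_mul_of_nonneg_left (hs₀ t (Finset.mem_univ t)) (hpos t)
      _ = M := by rw [← Finset.sum_mul, hsum, one_mul]
  have hM0 : M ≤ 0 := by nlinarith
  intro s
  have := hs₀ s (Finset.mem_univ s)
  linarith
end

section
/- Let S be a finite set, β ∈ (0,1), r : S → ℝ, and σ, σ' stationary policies with policy-evaluation values v_σ, v_{σ'} (unique solutions of v s = β·r s + (1-β)·∑_t (π s) t · v t for π = σ, σ'). If β·r s + (1-β)·∑_t (σ' s) t · v_σ t ≥ v_σ s for all s ∈ S, then v_{σ'} s ≥ v_σ s for all s ∈ S. -/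
theorem strategy_improvement_step {S : Type*} [Fintype S]
    (β : ℝ) (hβ0 : 0 < β) (hβ1 : β < 1) (r : S → ℝ)
    (σ σ' : S → S → ℝ)
    (hσ : ∀ s, (∀ t, 0 ≤ σ s t) ∧ ∑ t, σ s t = 1)
    (hσ' : ∀ s, (∀ t, 0 ≤ σ' s t) ∧ ∑ t, σ' s t = 1)
    (vσ vσ' : S → ℝ)
    (hvσ : ∀ s, vσ s = β * r s + (1 - β) * ∑ t, σ s t * vσ t)
    (hvσ' : ∀ s, vσ' s = β * r s + (1 - β) * ∑ t, σ' s t * vσ' t)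
    (himp : ∀ s, vσ s ≤ β * r s + (1 - β) * ∑ t, σ' s t * vσ t) :
    ∀ s, vσ s ≤ vσ' s := by
  intro s
  set D : S → ℝ := fun t => vσ' t - vσ t with hD
  -- pick a minimizer of D
  have hne : (Finset.univ : Finset S).Nonempty := ⟨s, Finset.mem_univ s⟩
  obtain ⟨s0, -, hs0⟩ := Finset.exists_min_image Finset.univ D hne
  have hmin : ∀ t, D s0 ≤ D t := fun t => hs0 t (Finset.mem_univ t)
  -- key inequality at s0
  have hkey : (1 - β) * ∑ t, σ' s0 t * D t ≤ D s0 := by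
    have h1 := hvσ' s0
    have h2 := himp s0
    have : (1 - β) * ∑ t, σ' s0 t * (vσ' t - vσ t) ≤ vσ' s0 - vσ s0 := by
      have hsum : ∑ t, σ' s0 t * (vσ' t - vσ t)
          = (∑ t, σ' s0 t * vσ' t) - ∑ t, σ' s0 t * vσ t := by
        rw [← Finset.sum_sub_distrib]
        exact Finset.sum_congr rfl fun t _ => by ring
      rw [hsum]; nlinarith
    simpa [hD] using this
  have hsum_ge : (1 - β) * (D s0) ≤ (1 - β) * ∑ t, σ' s0 t * D t := by
    apply mul_le_mul_of_nonneg_left _ (by linarith)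
    calc D s0 = ∑ t, σ' s0 t * D s0 := by
          rw [← Finset.sum_mul, (hσ' s0).2, one_mul]
      _ ≤ ∑ t, σ' s0 t * D t :=
          Finset.sum_le_sum fun t _ =>
            mul_le_mul_of_nonneg_left (hmin t) ((hσ' s0).1 t)
  have h0 : 0 ≤ D s0 := by nlinarith
  have := hmin s
  simp only [hD] at this h0 ⊢
  linarith
end

section
/- Let S be a finite set, β ∈ (0,1), and partition S into S_u and S_l. Let r : S_u → ℝ and δ : S → D(S) with the property that from every s ∈ S_l the set S_u is reached with probability 1 in one step (i.e., δ(s) is supported on S_u for s ∈ S_l). Define the operator T on S → ℝ by (T v)(s) = β·r s + (1-β)·∑_t δ(s) t · v t for s ∈ S_u and (T v)(s) = ∑_{t ∈ S_u} δ(s) t · v t for s ∈ S_l. Then T∘T is a contraction on (S → ℝ, sup-norm) with constant 1-β, and hence T has a unique fixed point. -/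
private lemma sum_bound_aux {S : Type*} [Fintype S] (A : Finset S) (c f : S → ℝ)
    (hc : ∀ t, 0 ≤ c t) (hc1 : ∑ t ∈ A, c t ≤ 1) (B : ℝ) (hB : 0 ≤ B)
    (hf : ∀ t ∈ A, |f t| ≤ B) : |∑ t ∈ A, c t * f t| ≤ B := by
  calc |∑ t ∈ A, c t * f t| ≤ ∑ t ∈ A, |c t * f t| := Finset.abs_sum_le_sum_abs _ _
    _ ≤ ∑ t ∈ A, c t * B := Finset.sum_le_sum (fun t ht => by
        rw [abs_mul, abs_of_nonneg (hc t)]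
        exact mul_le_mul_of_nonneg_left (hf t ht) (hc t))
    _ = (∑ t ∈ A, c t) * B := (Finset.sum_mul _ _ _).symm
    _ ≤ 1 * B := mul_le_mul_of_nonneg_right hc1 hB
    _ = B := one_mul B

theorem two_level_operator_square_contraction {S : Type*} [Fintype S] [DecidableEq S] [Nonempty S]
    (β : ℝ) (hβ0 : 0 < β) (hβ1 : β < 1)
    (Su : Finset S) (r : S → ℝ) (δ : S → S → ℝ)
    (hδ : ∀ s, (∀ t, 0 ≤ δ s t) ∧ ∑ t, δ s t = 1)
    (hsupp : ∀ s ∉ Su, ∀ t, δ s t ≠ 0 → t ∈ Su)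
    (T : (S → ℝ) → (S → ℝ))
    (hT : ∀ v s, T v s =
      if s ∈ Su then β * r s + (1 - β) * ∑ t, δ s t * v t
      else ∑ t ∈ Su, δ s t * v t) :
    (∀ v w : S → ℝ,
      Finset.univ.sup' Finset.univ_nonempty (fun s => |T (T v) s - T (T w) s|) ≤
        (1 - β) * Finset.univ.sup' Finset.univ_nonempty (fun s => |v s - w s|)) ∧
    ∃! v : S → ℝ, T v = v := by
  have h1β : (0:ℝ) ≤ 1 - β := by linarith
  -- key one-step estimates
  have key : ∀ (v w : S → ℝ) (B : ℝ), 0 ≤ B → (∀ t, |v t - w t| ≤ B) →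
      (∀ s, |T v s - T w s| ≤ B) ∧ (∀ s ∈ Su, |T v s - T w s| ≤ (1 - β) * B) := by
    intro v w B hB hvw
    have hsub : ∀ s, (∑ t, δ s t * v t) - (∑ t, δ s t * w t) = ∑ t, δ s t * (v t - w t) := by
      intro s
      rw [← Finset.sum_sub_distrib]
      exact Finset.sum_congr rfl (fun t _ => (mul_sub _ _ _).symm)
    have hSu : ∀ s ∈ Su, |T v s - T w s| ≤ (1 - β) * B := by
      intro s hs
      have heq : T v s - T w s = (1 - β) * ∑ t, δ s t * (v t - w t) := by
        rw [hT, hT, if_pos hs, if_pos hs, ← hsub s]; ring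
      rw [heq, abs_mul, abs_of_nonneg h1β]
      exact mul_le_mul_of_nonneg_left
        (sum_bound_aux _ _ _ (hδ s).1 (le_of_eq (hδ s).2) B hB (fun t _ => hvw t)) h1β
    refine ⟨fun s => ?_, hSu⟩
    by_cases hs : s ∈ Su
    · calc |T v s - T w s| ≤ (1 - β) * B := hSu s hs
        _ ≤ 1 * B := mul_le_mul_of_nonneg_right (by linarith) hB
        _ = B := one_mul B
    · have heq : T v s - T w s = ∑ t ∈ Su, δ s t * (v t - w t) := by
        rw [hT, hT, if_neg hs, if_neg hs, ← Finset.sum_sub_distrib]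
        exact Finset.sum_congr rfl (fun t _ => (mul_sub _ _ _).symm)
      rw [heq]
      refine sum_bound_aux _ _ _ (hδ s).1 ?_ B hB (fun t _ => hvw t)
      calc ∑ t ∈ Su, δ s t ≤ ∑ t, δ s t :=
            Finset.sum_le_sum_of_subset_of_nonneg (Finset.subset_univ Su)
              (fun t _ _ => (hδ s).1 t)
        _ = 1 := (hδ s).2
  -- pointwise two-step estimate
  have key2 : ∀ (v w : S → ℝ) (B : ℝ), 0 ≤ B → (∀ t, |v t - w t| ≤ B) →
      ∀ s, |T (T v) s - T (T w) s| ≤ (1 - β) * B := by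
    intro v w B hB hvw s
    obtain ⟨h1, h2⟩ := key v w B hB hvw
    by_cases hs : s ∈ Su
    · exact (key (T v) (T w) B hB h1).2 s hs
    · have heq : T (T v) s - T (T w) s = ∑ t ∈ Su, δ s t * (T v t - T w t) := by
        rw [hT, hT, if_neg hs, if_neg hs, ← Finset.sum_sub_distrib]
        exact Finset.sum_congr rfl (fun t _ => (mul_sub _ _ _).symm)
      rw [heq]
      refine sum_bound_aux _ _ _ (hδ s).1 ?_ ((1 - β) * B) (mul_nonneg h1β hB) h2
      calc ∑ t ∈ Su, δ s t ≤ ∑ t, δ s t :=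
            Finset.sum_le_sum_of_subset_of_nonneg (Finset.subset_univ Su)
              (fun t _ _ => (hδ s).1 t)
        _ = 1 := (hδ s).2
  have contr : ∀ v w : S → ℝ,
      Finset.univ.sup' Finset.univ_nonempty (fun s => |T (T v) s - T (T w) s|) ≤
        (1 - β) * Finset.univ.sup' Finset.univ_nonempty (fun s => |v s - w s|) := by
    intro v w
    set M := Finset.univ.sup' Finset.univ_nonempty (fun s => |v s - w s|) with hM
    have hM0 : 0 ≤ M := le_trans (abs_nonneg _)
      (Finset.le_sup' (fun s => |v s - w s|) (Finset.mem_univ (Classical.arbitrary S)))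
    have hb : ∀ t, |v t - w t| ≤ M := fun t =>
      Finset.le_sup' (fun s => |v s - w s|) (Finset.mem_univ t)
    exact Finset.sup'_le _ _ (fun s _ => key2 v w M hM0 hb s)
  refine ⟨contr, ?_⟩
  -- set up contraction on the Pi metric space
  set K : NNReal := ⟨1 - β, h1β⟩ with hK
  have hK1 : K < 1 := by
    rw [← NNReal.coe_lt_coe]; show (1 - β : ℝ) < 1; linarith
  have hlip : LipschitzWith K (T ∘ T) := by
    apply LipschitzWith.of_dist_le_mul
    intro v w
    have hKc : (K:ℝ) = 1 - β := rfl
    rw [hKc, dist_pi_le_iff (mul_nonneg h1β dist_nonneg)]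
    intro s
    have hb : ∀ t, |v t - w t| ≤ dist v w := fun t => by
      have := dist_le_pi_dist v w t
      rwa [Real.dist_eq] at this
    rw [Real.dist_eq]
    exact key2 v w (dist v w) dist_nonneg hb s
  have hcw : ContractingWith K (T ∘ T) := ⟨hK1, hlip⟩
  let v₀ := hcw.fixedPoint (T ∘ T)
  have hfix : (T ∘ T) v₀ = v₀ := hcw.fixedPoint_isFixedPt
  have hTfix : (T ∘ T) (T v₀) = T v₀ := by
    show T (T (T v₀)) = T v₀
    have : T ((T ∘ T) v₀) = T v₀ := by rw [hfix]
    exact this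
  have hv : T v₀ = v₀ := hcw.fixedPoint_unique' hTfix hfix
  refine ⟨v₀, hv, fun w hw => ?_⟩
  have hw2 : (T ∘ T) w = w := by show T (T w) = w; rw [hw, hw]
  exact hcw.fixedPoint_unique' hw2 hfix
end
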